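/- Let f : ℝⁿ → ℝ be differentiable, m-strongly convex, and have L-Lipschitz gradient with 0 < m ≤ L, with minimizer x_* and minimum value f_* = f(x_*). Let β ∈ (0, 1) and let (x_k) satisfy x_{k+1} = x_k − t_k ∇f(x_k), where t_k ∈ [β² t₊(k), t₊(k)] and t₊(k) is a minimizer of t ↦ f(x_k − t ∇f(x_k)). Then for all k ≥ 0, f(x_k) − f_* ≤ (1 − β²(1 − √(1 − m/L)))^k (f(x_0) − f_*). -/

import Mathlib

/-!
Strong convexity gives the Polyak–Łojasiewicz inequality `2 m (f x - f_*) ≤ ‖∇f x‖²`, and the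
Lipschitz gradient gives the descent lemma, so the exact line-search point is at least as good as
the step `1 / L`: `f (x - t₊ ∇f x) ≤ f x - ‖∇f x‖² / (2 L)`. Along the search line `f` is convex,
so on `[β² t₊, t₊]` it is bounded by its value at `β² t₊`, hence by the chord from `0` to `t₊`.
This yields the contraction factor `1 - β² m / L`, which is at most
`1 - β² (1 - √(1 - m / L))` because `1 - m / L ≤ √(1 - m / L)`.
-/

open Filter Topology
open scoped RealInnerProductSpace

theorem ConvexOn.le_one_sub_mul_add_mul_of_mem_Icc {φ : ℝ → ℝ} (hφ : ConvexOn ℝ Set.univ φ)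
    {τ c t : ℝ} (hτ : ∀ s, φ τ ≤ φ s) (hc : c ∈ Set.Icc (0 : ℝ) 1)
    (ht : t ∈ Set.Icc (c * τ) τ) :
    φ t ≤ (1 - c) * φ 0 + c * φ τ :=
  calc φ t ≤ max (φ (c * τ)) (φ τ) :=
        hφ.le_on_segment trivial trivial (by rwa [segment_eq_Icc (ht.1.trans ht.2)])
    _ = φ (c * τ) := max_eq_left (hτ _)
    _ ≤ (1 - c) * φ 0 + c * φ τ := by
        simpa using
          hφ.2 (Set.mem_univ 0) (Set.mem_univ τ) (sub_nonneg.2 hc.2) hc.1 (sub_add_cancel 1 c)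

theorem one_sub_sqrt_one_sub_le {a : ℝ} (ha : 0 ≤ a) : 1 - √(1 - a) ≤ a := by
  have : 1 - a ≤ √(1 - a) := Real.le_sqrt_self_iff.mpr (by linarith)
  linarith

theorem ConvexOn.comp_sub_smul {E : Type*} [AddCommGroup E] [Module ℝ E] {f : E → ℝ}
    (hf : ConvexOn ℝ Set.univ f) (p v : E) :
    ConvexOn ℝ Set.univ (fun s : ℝ => f (p - s • v)) := by
  have hcomp := hf.comp_affineMap (AffineMap.lineMap p (p - v))
  have hline : ⇑(AffineMap.lineMap (k := ℝ) p (p - v)) = fun s : ℝ => p - s • v := by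
    ext s
    rw [AffineMap.lineMap_apply_module']
    module
  simpa [Function.comp_def, hline] using hcomp

section Gradient

variable {E : Type*} [NormedAddCommGroup E] [InnerProductSpace ℝ E] [CompleteSpace E]
  {f : E → ℝ} {x g : E} {m L : ℝ}

theorem HasGradientAt.hasDerivAt_comp_add_smul {v : E} {s : ℝ}
    (h : HasGradientAt f g (x + s • v)) :
    HasDerivAt (fun r : ℝ => f (x + r • v)) ⟪g, v⟫ s := by
  have hline : HasDerivAt (fun r : ℝ => x + r • v) v s := by
    simpa using ((hasDerivAt_id s).smul_const v).const_add x
  simpa [Function.comp_def] using h.hasFDerivAt.comp_hasDerivAt s hline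

theorem StrongConvexOn.add_inner_add_le (hf : StrongConvexOn Set.univ m f)
    (hg : HasGradientAt f g x) (y : E) :
    f x + ⟪g, y - x⟫ + m / 2 * ‖y - x‖ ^ 2 ≤ f y := by
  have hslope : Tendsto (fun s : ℝ => s⁻¹ * (f (x + s • (y - x)) - f x)) (𝓝[>] 0)
      (𝓝 ⟪g, y - x⟫) := by
    simpa [InnerProductSpace.toDual_apply_apply] using
      (hg.hasFDerivAt.hasLineDerivAt (y - x)).tendsto_slope_zero_right
  have hbound : Tendsto (fun s : ℝ => f y - f x - (1 - s) * (m / 2 * ‖y - x‖ ^ 2)) (𝓝[>] 0)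
      (𝓝 (f y - f x - m / 2 * ‖y - x‖ ^ 2)) := by
    refine tendsto_nhdsWithin_of_tendsto_nhds ?_
    simpa using (Continuous.tendsto (by fun_prop :
      Continuous fun s : ℝ => f y - f x - (1 - s) * (m / 2 * ‖y - x‖ ^ 2)) 0)
  have hle : ∀ᶠ s in 𝓝[>] (0 : ℝ),
      s⁻¹ * (f (x + s • (y - x)) - f x) ≤ f y - f x - (1 - s) * (m / 2 * ‖y - x‖ ^ 2) := by
    filter_upwards [Ioo_mem_nhdsGT (zero_lt_one' ℝ)] with s ⟨hs0, hs1⟩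
    have hconv := hf.2 (Set.mem_univ x) (Set.mem_univ y) (sub_nonneg.2 hs1.le) hs0.le
      (sub_add_cancel 1 s)
    have hpt : (1 - s) • x + s • y = x + s • (y - x) := by module
    rw [hpt, norm_sub_rev, smul_eq_mul, smul_eq_mul] at hconv
    rw [inv_mul_le_iff₀ hs0]
    nlinarith
  linarith [le_of_tendsto_of_tendsto hslope hbound hle]

theorem StrongConvexOn.mul_sub_le_norm_sq (hm : 0 ≤ m) (hf : StrongConvexOn Set.univ m f)
    (hg : HasGradientAt f g x) (y : E) :
    2 * m * (f x - f y) ≤ ‖g‖ ^ 2 := by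
  have hlower := hf.add_inner_add_le hg y
  have hcs : -(‖g‖ * ‖y - x‖) ≤ ⟪g, y - x⟫ := (abs_le.mp (abs_real_inner_le_norm g (y - x))).1
  have hgap : f x - f y ≤ ‖g‖ * ‖y - x‖ - m / 2 * ‖y - x‖ ^ 2 := by linarith
  nlinarith [mul_le_mul_of_nonneg_left hgap hm, sq_nonneg (‖g‖ - m * ‖y - x‖)]

theorem apply_add_le_of_norm_gradient_sub_le (hf : Differentiable ℝ f)
    (hlip : ∀ y, ‖gradient f y - gradient f x‖ ≤ L * ‖y - x‖) (v : E) :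
    f (x + v) ≤ f x + ⟪gradient f x, v⟫ + L / 2 * ‖v‖ ^ 2 := by
  set θ : ℝ → ℝ := fun s => f (x + s • v) - s * ⟪gradient f x, v⟫ - L / 2 * s ^ 2 * ‖v‖ ^ 2
  have hθ' : ∀ s : ℝ, HasDerivAt θ
      (⟪gradient f (x + s • v) - gradient f x, v⟫ - L * s * ‖v‖ ^ 2) s := by
    intro s
    have hquad := ((hasDerivAt_pow 2 s).const_mul (L / 2)).mul_const (‖v‖ ^ 2)
    refine ((((hf _).hasGradientAt.hasDerivAt_comp_add_smul).sub
      ((hasDerivAt_id s).mul_const ⟪gradient f x, v⟫)).sub hquad).congr_deriv ?_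
    rw [inner_sub_left]
    push_cast
    ring
  have hanti : AntitoneOn θ (Set.Icc 0 1) := by
    refine antitoneOn_of_hasDerivWithinAt_nonpos (convex_Icc 0 1)
      (HasDerivAt.continuousOn fun s _ => hθ' s) (fun s _ => (hθ' s).hasDerivWithinAt) ?_
    intro s hs
    rw [interior_Icc] at hs
    have hgrad : ‖gradient f (x + s • v) - gradient f x‖ ≤ L * s * ‖v‖ := by
      simpa [norm_smul, abs_of_pos hs.1, mul_assoc] using hlip (x + s • v)
    nlinarith [real_inner_le_norm (gradient f (x + s • v) - gradient f x) v,
      mul_le_mul_of_nonneg_right hgrad (norm_nonneg v)]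
  have h01 : θ 1 ≤ θ 0 := hanti (by norm_num) (by norm_num) zero_le_one
  simp only [θ, one_smul, one_pow, one_mul, mul_one, zero_smul, add_zero, zero_mul, sub_zero,
    ne_eq, OfNat.ofNat_ne_zero, not_false_eq_true, zero_pow, mul_zero] at h01
  linarith

theorem apply_sub_inv_smul_gradient_le (hL : 0 < L) (hf : Differentiable ℝ f)
    (hlip : ∀ y, ‖gradient f y - gradient f x‖ ≤ L * ‖y - x‖) :
    f (x - L⁻¹ • gradient f x) ≤ f x - ‖gradient f x‖ ^ 2 / (2 * L) := by
  have h := apply_add_le_of_norm_gradient_sub_le hf hlip (-(L⁻¹ • gradient f x))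
  rw [← sub_eq_add_neg, inner_neg_right, real_inner_smul_right, real_inner_self_eq_norm_sq,
    norm_neg, norm_smul, Real.norm_of_nonneg (inv_nonneg.2 hL.le)] at h
  convert h using 1
  field_simp
  ring

theorem StrongConvexOn.sub_le_mul_sub_of_line_search (hL : 0 < L) (hm : 0 ≤ m)
    (hf : StrongConvexOn Set.univ m f) (hdiff : Differentiable ℝ f)
    (hlip : ∀ y, ‖gradient f y - gradient f x‖ ≤ L * ‖y - x‖) {τ c t : ℝ}
    (hτ : ∀ s : ℝ, f (x - τ • gradient f x) ≤ f (x - s • gradient f x))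
    (hc : c ∈ Set.Icc (0 : ℝ) 1) (ht : t ∈ Set.Icc (c * τ) τ) (z : E) :
    f (x - t • gradient f x) - f z ≤ (1 - c * (m / L)) * (f x - f z) := by
  set g := gradient f x
  have hconv : ConvexOn ℝ Set.univ f := strongConvexOn_zero.mp (hf.mono hm)
  have hsearch : f (x - t • g) ≤ (1 - c) * f x + c * f (x - τ • g) := by
    simpa using (hconv.comp_sub_smul x g).le_one_sub_mul_add_mul_of_mem_Icc hτ hc ht
  have hexact : f (x - τ • g) ≤ f x - ‖g‖ ^ 2 / (2 * L) :=
    (hτ L⁻¹).trans (apply_sub_inv_smul_gradient_le hL hdiff hlip)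
  have hPL : m / L * (f x - f z) ≤ ‖g‖ ^ 2 / (2 * L) := by
    have hscale : m / L * (f x - f z) = 2 * m * (f x - f z) / (2 * L) := by
      field_simp
    rw [hscale]
    exact div_le_div_of_nonneg_right (hf.mul_sub_le_norm_sq hm (hdiff x).hasGradientAt z)
      (by positivity)
  nlinarith [mul_le_mul_of_nonneg_left hexact hc.1, mul_le_mul_of_nonneg_left hPL hc.1]

end Gradient

/-- Linear convergence of steepest descent with approximately exact line search
(step size in `[β² t₊, t₊]` where `t₊` is the exact line search minimizer), on an
`m`-strongly convex function with `L`-Lipschitz gradient: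
`f(x_k) − f_* ≤ (1 − β²(1 − √(1 − m/L)))^k (f(x_0) − f_*)`. -/
theorem stmt_13 {n : ℕ} (f : EuclideanSpace ℝ (Fin n) → ℝ) (m L : ℝ)
    (hm : 0 < m) (hmL : m ≤ L)
    (hdiff : Differentiable ℝ f)
    (hconv : ConvexOn ℝ Set.univ (fun y => f y - m / 2 * ‖y‖ ^ 2))
    (hlip : ∀ x y, ‖gradient f x - gradient f y‖ ≤ L * ‖x - y‖)
    (xstar : EuclideanSpace ℝ (Fin n)) (hmin : ∀ y, f xstar ≤ f y)
    (β : ℝ) (hβ : β ∈ Set.Ioo (0 : ℝ) 1)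
    (x : ℕ → EuclideanSpace ℝ (Fin n)) (t tplus : ℕ → ℝ)
    (htplus : ∀ k, ∀ s : ℝ,
      f (x k - tplus k • gradient f (x k)) ≤ f (x k - s • gradient f (x k)))
    (ht : ∀ k, t k ∈ Set.Icc (β ^ 2 * tplus k) (tplus k))
    (hstep : ∀ k, x (k + 1) = x k - t k • gradient f (x k)) :
    ∀ k : ℕ, f (x k) - f xstar ≤
      (1 - β ^ 2 * (1 - Real.sqrt (1 - m / L))) ^ k * (f (x 0) - f xstar) := by
  have hL : 0 < L := hm.trans_le hmL
  have hf : StrongConvexOn Set.univ m f := strongConvexOn_iff_convex.mpr hconv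
  have hc : β ^ 2 ∈ Set.Icc (0 : ℝ) 1 := ⟨sq_nonneg β, pow_le_one₀ hβ.1.le hβ.2.le⟩
  have hρ : 0 ≤ 1 - β ^ 2 * (1 - √(1 - m / L)) := by
    nlinarith [Real.sqrt_nonneg (1 - m / L), hc.1, hc.2]
  have hrate : 1 - β ^ 2 * (m / L) ≤ 1 - β ^ 2 * (1 - √(1 - m / L)) := by
    nlinarith [mul_le_mul_of_nonneg_left (one_sub_sqrt_one_sub_le (div_nonneg hm.le hL.le)) hc.1]
  intro k
  refine le_geom (u := fun k => f (x k) - f xstar) hρ k fun j _ => ?_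
  calc f (x (j + 1)) - f xstar ≤ (1 - β ^ 2 * (m / L)) * (f (x j) - f xstar) := by
        rw [hstep j]
        exact hf.sub_le_mul_sub_of_line_search hL hm.le hdiff (fun y => hlip y (x j))
          (htplus j) hc (ht j) xstar
    _ ≤ (1 - β ^ 2 * (1 - √(1 - m / L))) * (f (x j) - f xstar) :=
        mul_le_mul_of_nonneg_right hrate (sub_nonneg.2 (hmin _))
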